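/- arXiv:2206.04653 — 3 statements merged into one kernel-verified Lean document; each statement's English description precedes it below -/
import Mathlib

section
/- Let G be an abelian group and n a natural number with n ≠ 1. Let (a, c⁺, c⁻) and (a', c'⁺, c'⁻) be triples of elements of G, each of which satisfies the Clifford relations of type I or the Clifford relations of type II. If the multiset consisting of n copies of a together with c⁺ and c⁻ is equal to the multiset consisting of n copies of a' together with c'⁺ and c'⁻, then the multiset {c⁺, c⁻} is equal to the multiset {c'⁺, c'⁻}. -/
/-- The Clifford relations of type I: `2c⁺ = a`, `c⁻ = 3c⁺` and `4c⁺ = 0`. -/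
def CliffordRelI {G : Type*} [AddCommGroup G] (a cp cm : G) : Prop :=
  2 • cp = a ∧ cm = 3 • cp ∧ 4 • cp = 0

/-- The Clifford relations of type II: `2c⁺ = 0`, `2c⁻ = 0` and `c⁺ + c⁻ = a`. -/
def CliffordRelII {G : Type*} [AddCommGroup G] (a cp cm : G) : Prop :=
  2 • cp = 0 ∧ 2 • cm = 0 ∧ cp + cm = a

/-- A Clifford triple (of either type) with `c⁺ = c⁻` has `a = 0`. -/
lemma clifford_eq_zero {G : Type*} [AddCommGroup G] {a cp cm : G}
    (h : CliffordRelI a cp cm ∨ CliffordRelII a cp cm) (hcc : cp = cm) : a = 0 := by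
  rcases h with ⟨h1, h2, h3⟩ | ⟨h1, h2, h3⟩
  · have e : cp = 3 • cp := hcc.trans h2
    have e2 : 2 • cp = 0 := by
      have : (0 : G) + cp = 2 • cp + cp := by
        rw [zero_add]; nth_rewrite 1 [e]; rw [succ_nsmul]
      exact (add_right_cancel this).symm
    rw [← h1, e2]
  · rw [← h3, ← hcc, ← two_nsmul, h1]

/-- Brauer-class comparison: if two triples each satisfying Clifford relations of
type I or II give the same multiset of `n` copies of `a` plus `{c⁺, c⁻}` (with `n ≠ 1`),
then the multisets `{c⁺, c⁻}` and `{c'⁺, c'⁻}` agree. -/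
theorem clifford_multiset_cancel {G : Type*} [AddCommGroup G] (n : ℕ) (hn : n ≠ 1)
    (a cp cm a' cp' cm' : G)
    (h : CliffordRelI a cp cm ∨ CliffordRelII a cp cm)
    (h' : CliffordRelI a' cp' cm' ∨ CliffordRelII a' cp' cm')
    (heq : Multiset.replicate n a + {cp, cm} = Multiset.replicate n a' + {cp', cm'}) :
    ({cp, cm} : Multiset G) = {cp', cm'} := by
  rcases eq_or_ne a a' with rfl | hne
  · exact add_left_cancel heq
  · match n, hn with
    | 0, _ => simpa using heq
    | (k+2), _ =>
      classical
      have hca := congrArg (Multiset.count a) heq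
      have hca' := congrArg (Multiset.count a') heq
      simp [Multiset.count_replicate, hne, hne.symm, Multiset.count_cons,
        Multiset.count_singleton] at hca hca'
      have e1 : a = cm' := by by_contra hx; split_ifs at hca <;> omega
      have e2 : a = cp' := by by_contra hx; split_ifs at hca <;> omega
      have e3 : a' = cm := by by_contra hx; split_ifs at hca' <;> omega
      have e4 : a' = cp := by by_contra hx; split_ifs at hca' <;> omega
      have z1 : a = 0 := clifford_eq_zero h (e4.symm.trans e3)
      have z2 : a' = 0 := clifford_eq_zero h' (e2.symm.trans e1)
      exact absurd (z1.trans z2.symm) hne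
end

section
/- Let G be an abelian group and let (a, c⁺, c⁻) and (a', c'⁺, c'⁻) be triples of elements of G, both of which satisfy the Clifford relations of type I. If the multiset {a, c⁺, c⁻} is equal to the multiset {a', c'⁺, c'⁻}, then the multiset {c⁺, c⁻} is equal to the multiset {c'⁺, c'⁻}. -/
/-- If two triples both satisfying the Clifford relations of type I give rise to the
same multiset `{a, c⁺, c⁻}`, then the multisets `{c⁺, c⁻}` and `{c'⁺, c'⁻}` agree. -/
theorem clifford_multiset_cancel_typeI {G : Type*} [AddCommGroup G]
    (a cp cm a' cp' cm' : G)
    (h : CliffordRelI a cp cm) (h' : CliffordRelI a' cp' cm')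
    (heq : ({a, cp, cm} : Multiset G) = {a', cp', cm'}) :
    ({cp, cm} : Multiset G) = {cp', cm'} := by
  obtain ⟨h1, h2, h3⟩ := h
  obtain ⟨h1', h2', h3'⟩ := h'
  have hs : a + (cp + cm) = a' + (cp' + cm') := by
    have := congrArg Multiset.sum heq
    simpa using this
  have e6 : (6 : ℕ) • cp = 6 • cp' := by
    rw [show (6 : ℕ) • cp = 2 • cp + (cp + 3 • cp) by abel,
        show (6 : ℕ) • cp' = 2 • cp' + (cp' + 3 • cp') by abel,
        h1, h1', ← h2, ← h2']
    exact hs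
  have e2 : (2 : ℕ) • cp = 2 • cp' := by
    have l : (6 : ℕ) • cp = 4 • cp + 2 • cp := by abel
    have l' : (6 : ℕ) • cp' = 4 • cp' + 2 • cp' := by abel
    rw [l, l', h3, h3', zero_add, zero_add] at e6
    exact e6
  have ha : a = a' := by rw [← h1, ← h1', e2]
  rw [ha] at heq
  exact (Multiset.cons_inj_right a').mp heq
end

section
/- Let k be a field of characteristic zero, V a finite-dimensional k-vector space, m a natural number, and f : k^m → V, g : V → k^m two k-linear maps. Suppose there is an m × m matrix M with integer entries, with every diagonal entry odd and every off-diagonal entry even, such that g ∘ f is the linear endomorphism of k^m given (in the standard basis) by the matrix obtained from M by applying the canonical ring homomorphism ℤ → k entrywise. Then dim_k V ≥ m. -/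
/-- If `g ∘ f : k^m → V → k^m` is given by an integer matrix with odd diagonal and even
off-diagonal entries, then `dim V ≥ m` (over a field of characteristic zero). -/
theorem finrank_ge_of_comp_odd_matrix (k V : Type*) [Field k] [CharZero k]
    [AddCommGroup V] [Module k V] [FiniteDimensional k V]
    (m : ℕ) (f : (Fin m → k) →ₗ[k] V) (g : V →ₗ[k] (Fin m → k))
    (M : Matrix (Fin m) (Fin m) ℤ)
    (hdiag : ∀ i, Odd (M i i)) (hoff : ∀ i j, i ≠ j → Even (M i j))
    (hgf : g ∘ₗ f = Matrix.toLin' (M.map (Int.cast : ℤ → k))) :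
    m ≤ Module.finrank k V := by
  have hdet : Odd M.det := by
    have h2 : (M.map (Int.cast : ℤ → ZMod 2)) = 1 := by
      ext i j
      by_cases h : i = j
      · subst h
        obtain ⟨n, hn⟩ := hdiag i
        rw [Matrix.map_apply, hn, Matrix.one_apply_eq]
        push_cast
        rw [show ((2 : ZMod 2)) = 0 by decide]
        ring
      · obtain ⟨n, hn⟩ := hoff i j h
        rw [Matrix.map_apply, hn, Matrix.one_apply_ne h]
        push_cast
        exact CharTwo.add_self_eq_zero _
    have hc : ((M.det : ℤ) : ZMod 2) = ((1 : ℤ) : ZMod 2) := by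
      have : ((M.det : ℤ) : ZMod 2) = (M.map (Int.cast : ℤ → ZMod 2)).det :=
        RingHom.map_det (Int.castRingHom (ZMod 2)) M
      rw [this, h2, Matrix.det_one]
      norm_num
    rw [ZMod.intCast_eq_intCast_iff, Int.ModEq] at hc
    rw [Int.odd_iff]
    omega
  have hdetk : (M.map (Int.cast : ℤ → k)).det ≠ 0 := by
    rw [show M.map (Int.cast : ℤ → k) = M.map (Int.castRingHom k) from rfl,
      ← RingHom.mapMatrix_apply, ← RingHom.map_det]
    simp only [Int.coe_castRingHom, ne_eq, Int.cast_eq_zero]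
    intro h
    rw [h] at hdet
    simp [Int.odd_iff] at hdet
  have hinj : Function.Injective (g ∘ₗ f) := by
    rw [hgf, ← LinearMap.ker_eq_bot, Matrix.ker_toLin'_eq_bot_iff]
    intro v hv
    exact Matrix.eq_zero_of_mulVec_eq_zero hdetk hv
  have hf : Function.Injective f := fun x y h => hinj (by simp [LinearMap.comp_apply, h])
  calc m = Module.finrank k (Fin m → k) := by simp
    _ ≤ Module.finrank k V := LinearMap.finrank_le_finrank_of_injective hf
end
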